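/- (Nair's bound, recovered as a special case) For every integer $n \ge 7$, we have $\mathrm{lcm}(1, 2, \ldots, n) \ge 2^n$. -/

import Mathlib

/-!
For `0 < k ≤ n`, `k * choose n k` divides `lcm(1, …, n)`: by Kummer, the `p`-adic valuation of
`choose n k` counts the carries when adding `k` and `n - k` in base `p`, and a carry at position
`i ≤ log p n` needs `p ^ i ∤ k`. Using `k = m` and `k = m + 1` with `n = 2m + 1`, the coprime
numbers `m` and `2m + 1` both multiply `C(2m, m)` into `lcm(1, …, 2m + 1)`, and
`4 ^ m < m * C(2m, m)` gives the bound for `n ≥ 9`; `n = 7, 8` are checked directly.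
-/

open Finset

namespace Nat

theorem factorization_choose_add_factorization_le_log {p n k : ℕ} (hk : 0 < k) (hkn : k ≤ n) :
    (choose n k).factorization p + k.factorization p ≤ log p n := by
  by_cases hp : p.Prime
  swap
  · simp [factorization_eq_zero_of_not_prime _ hp]
  have hdisj : Disjoint {i ∈ Ico 1 (log p n + 1) | p ^ i ≤ k % p ^ i + (n - k) % p ^ i}
      {i ∈ Ico 1 (log p n + 1) | p ^ i ∣ k} := by
    simp +contextual [Finset.disjoint_right, dvd_iff_mod_eq_zero, Nat.mod_lt _ (pow_pos hp.pos _)]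
  rw [factorization_choose hp hkn (lt_add_one _),
    factorization_eq_card_pow_dvd_of_lt hp hk (hkn.trans_lt (lt_pow_succ_log_self hp.one_lt n)),
    ← card_union_of_disjoint hdisj, filter_union_right]
  exact (card_filter_le _ _).trans_eq (card_Ico _ _)

theorem mul_choose_dvd_lcmUpto {n k : ℕ} (hk : 0 < k) (hkn : k ≤ n) :
    k * choose n k ∣ lcmUpto n := by
  rw [← factorization_prime_le_iff_dvd (by positivity [choose_pos hkn]) (lcmUpto_ne_zero n)]
  intro p hp
  rw [factorization_lcmUpto n hp, factorization_mul hk.ne' (choose_pos hkn).ne', Finsupp.add_apply,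
    add_comm]
  exact factorization_choose_add_factorization_le_log hk hkn

theorem lcmUpto_dvd_lcmUpto {m n : ℕ} (h : m ≤ n) : lcmUpto m ∣ lcmUpto n :=
  Finset.lcm_dvd fun _ hx ↦ Finset.dvd_lcm (Icc_subset_Icc_right h hx)

theorem mul_mul_centralBinom_dvd_lcmUpto {m : ℕ} (hm : 0 < m) :
    m * (2 * m + 1) * centralBinom m ∣ lcmUpto (2 * m + 1) := by
  have h₁ : m * centralBinom m ∣ lcmUpto (2 * m + 1) :=
    (mul_choose_dvd_lcmUpto hm (by omega)).trans (lcmUpto_dvd_lcmUpto (by omega))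
  have h₂ : (2 * m + 1) * centralBinom m ∣ lcmUpto (2 * m + 1) := by
    rw [centralBinom, add_one_mul_choose_eq, mul_comm]
    exact mul_choose_dvd_lcmUpto (by omega) (by omega)
  have hcop : Coprime m (2 * m + 1) := by simp
  have h := Nat.lcm_dvd h₁ h₂
  rwa [Nat.lcm_mul_right, hcop.lcm_eq_mul] at h

theorem two_pow_le_lcmUpto_two_mul_add_one {m : ℕ} (hm : 4 ≤ m) :
    2 ^ (2 * m + 2) ≤ lcmUpto (2 * m + 1) :=
  calc 2 ^ (2 * m + 2) = 4 * 4 ^ m := by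
        rw [show 2 * m + 2 = 2 * (m + 1) by ring, pow_mul, pow_succ]; ring
    _ ≤ (2 * m + 1) * (m * centralBinom m) :=
      Nat.mul_le_mul (by omega) (four_pow_lt_mul_centralBinom m hm).le
    _ = m * (2 * m + 1) * centralBinom m := by ring
    _ ≤ lcmUpto (2 * m + 1) :=
      le_of_dvd (lcmUpto_pos _) (mul_mul_centralBinom_dvd_lcmUpto (by omega))

end Nat

/-- Nair's bound: for every integer `n ≥ 7`, `lcm(1, 2, …, n) ≥ 2^n`. -/
theorem lcm_range_ge_two_pow (n : ℕ) (hn : 7 ≤ n) :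
    2 ^ n ≤ (Finset.Icc 1 n).lcm id := by
  change 2 ^ n ≤ Nat.lcmUpto n
  obtain hsmall | hlarge := lt_or_ge n 9
  · interval_cases n <;> decide
  obtain ⟨m, rfl | rfl⟩ : ∃ m, n = 2 * m + 1 ∨ n = 2 * m + 2 := ⟨(n - 1) / 2, by omega⟩
  · exact (Nat.pow_le_pow_right two_pos (by omega)).trans
      (Nat.two_pow_le_lcmUpto_two_mul_add_one (by omega))
  · exact (Nat.two_pow_le_lcmUpto_two_mul_add_one (by omega)).trans
      (Nat.le_of_dvd (Nat.lcmUpto_pos _) (Nat.lcmUpto_dvd_lcmUpto (by omega)))
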